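/- Let g > 1 and let p be a real number with 0 < p ≤ g − 1. Then for all L > 0 and all ζ > 0: ∫₀^∞ u^{p−1}·(2uL + 1)^{−g}·exp(−u·L·ζ/(2uL + 1)) du ≤ Γ(p)·(L·ζ)^{−p}, where Γ denotes the Gamma function. -/

import Mathlib

/-! The substitution `u = t / (1 - 2Lt)`, `t ∈ (0, 1/(2L))`, turns `2uL + 1` into `1 / (1 - 2Lt)`
and the exponent into `-Lζ t`, so the integrand becomes `t^{p-1} e^{-Lζ t} (1 - 2Lt)^{g-p-1}`.
Since `0 < 1 - 2Lt ≤ 1` and `g - p - 1 ≥ 0`, the last factor is at most `1`, and what remains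
integrates over `(0, ∞)` to `Γ(p) (Lζ)^{-p}`. -/

open MeasureTheory Set Real

lemma lintegral_rpow_mul_exp_neg_mul_Ioi {p c : ℝ} (hp : 0 < p) (hc : 0 < c) :
    ∫⁻ t in Ioi (0 : ℝ), ENNReal.ofReal (t ^ (p - 1) * exp (-(c * t))) =
      ENNReal.ofReal (Gamma p * c ^ (-p)) := by
  have hint : IntegrableOn (fun t : ℝ => t ^ (p - 1) * exp (-(c * t))) (Ioi 0) := by
    simpa only [rpow_one, neg_mul] using
      integrableOn_rpow_mul_exp_neg_mul_rpow (by linarith : -1 < p - 1) one_pos hc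
  have hnonneg : ∀ᵐ t ∂volume.restrict (Ioi (0 : ℝ)), 0 ≤ t ^ (p - 1) * exp (-(c * t)) :=
    ae_restrict_of_forall_mem measurableSet_Ioi fun t (ht : 0 < t) => by positivity
  rw [← ofReal_integral_eq_lintegral_ofReal hint hnonneg, integral_rpow_mul_exp_neg_mul_Ioi hp hc,
    one_div, inv_rpow hc.le, ← rpow_neg hc.le, mul_comm]

lemma hasDerivAt_div_one_sub_mul {k t : ℝ} (h : 1 - k * t ≠ 0) :
    HasDerivAt (fun t => t / (1 - k * t)) ((1 - k * t) ^ 2)⁻¹ t := by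
  refine ((hasDerivAt_id' t).div (((hasDerivAt_id' t).const_mul k).const_sub 1) h).congr_deriv ?_
  field_simp
  ring

lemma one_sub_mul_pos_of_lt_inv {k t : ℝ} (hk : 0 < k) (ht : t < k⁻¹) : 0 < 1 - k * t := by
  have := mul_lt_mul_of_pos_left ht hk
  rw [mul_inv_cancel₀ hk.ne'] at this
  linarith

lemma injOn_div_one_sub_mul (k : ℝ) : InjOn (fun t => t / (1 - k * t)) {t | 1 - k * t ≠ 0} := by
  intro a ha b hb hab
  rw [div_eq_div_iff ha hb] at hab
  linarith

lemma image_div_one_sub_mul_Ioo {k : ℝ} (hk : 0 < k) :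
    (fun t => t / (1 - k * t)) '' Ioo 0 k⁻¹ = Ioi 0 := by
  ext u
  constructor
  · rintro ⟨t, ⟨ht, htk⟩, rfl⟩
    exact div_pos ht (one_sub_mul_pos_of_lt_inv hk htk)
  · intro (hu : 0 < u)
    have hd : 0 < 1 + k * u := by positivity
    refine ⟨u / (1 + k * u), ⟨by positivity, ?_⟩, ?_⟩
    · rw [div_lt_iff₀ hd, ← div_eq_inv_mul, lt_div_iff₀ hk]
      linarith
    · field_simp
      ring

noncomputable def cirIntegrand (p g L ζ u : ℝ) : ℝ :=
  u ^ (p - 1) * (2 * u * L + 1) ^ (-g) * exp (-(u * L * ζ) / (2 * u * L + 1))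

lemma inv_sq_mul_cirIntegrand_div_one_sub (p g ζ : ℝ) {L t : ℝ} (ht : 0 < t)
    (hd : 0 < 1 - 2 * L * t) :
    ((1 - 2 * L * t) ^ 2)⁻¹ * cirIntegrand p g L ζ (t / (1 - 2 * L * t)) =
      t ^ (p - 1) * exp (-(L * ζ * t)) * (1 - 2 * L * t) ^ (g - p - 1) := by
  set d := 1 - 2 * L * t
  have hscale : 2 * (t / d) * L + 1 = d⁻¹ := by
    field_simp
    ring
  have hexp : -(t / d * L * ζ) / d⁻¹ = -(L * ζ * t) := by
    field_simp
  have hpow : d ^ (g - p - 1) = d ^ g / d ^ (p - 1) / d ^ 2 := by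
    rw [← rpow_natCast, ← rpow_sub hd, ← rpow_sub hd]
    congr 1
    push_cast
    ring
  rw [cirIntegrand, hscale, hexp, div_rpow ht.le hd.le, inv_rpow hd.le, rpow_neg hd.le, inv_inv,
    hpow]
  ring

theorem cir_negative_moment_bound_sharp_general
    (p g : ℝ) (hp₁ : 0 < p) (hp₂ : p ≤ g - 1) :
    ∀ L : ℝ, 0 < L → ∀ ζ : ℝ, 0 < ζ →
      ∫⁻ u in Set.Ioi (0 : ℝ),
          ENNReal.ofReal (u ^ (p - 1) * (2 * u * L + 1) ^ (-g)
            * Real.exp (-(u * L * ζ) / (2 * u * L + 1))) ≤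
        ENNReal.ofReal (Real.Gamma p * (L * ζ) ^ (-p)) := by
  intro L hL ζ hζ
  have hk : 0 < 2 * L := by positivity
  have hden : ∀ t ∈ Ioo 0 (2 * L)⁻¹, 0 < 1 - 2 * L * t := fun t ht =>
    one_sub_mul_pos_of_lt_inv hk ht.2
  have hsubst := lintegral_image_eq_lintegral_abs_deriv_mul measurableSet_Ioo
    (fun t ht => (hasDerivAt_div_one_sub_mul (hden t ht).ne').hasDerivWithinAt)
    ((injOn_div_one_sub_mul (2 * L)).mono fun t ht => (hden t ht).ne')
    (fun u => ENNReal.ofReal (cirIntegrand p g L ζ u))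
  rw [image_div_one_sub_mul_Ioo hk] at hsubst
  calc ∫⁻ u in Ioi 0, ENNReal.ofReal (cirIntegrand p g L ζ u)
      = _ := hsubst
    _ ≤ ∫⁻ t in Ioo 0 (2 * L)⁻¹, ENNReal.ofReal (t ^ (p - 1) * exp (-(L * ζ * t))) := by
      refine setLIntegral_mono' measurableSet_Ioo fun t ht => ?_
      have hd := hden t ht
      rw [← ENNReal.ofReal_mul (abs_nonneg _), abs_of_pos (inv_pos.2 (pow_pos hd 2)),
        inv_sq_mul_cirIntegrand_div_one_sub p g ζ ht.1 hd]
      refine ENNReal.ofReal_le_ofReal (mul_le_of_le_one_right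
        (mul_nonneg (rpow_nonneg ht.1.le _) (exp_pos _).le) ?_)
      exact rpow_le_one hd.le (by nlinarith [ht.1]) (by linarith)
    _ ≤ ∫⁻ t in Ioi 0, ENNReal.ofReal (t ^ (p - 1) * exp (-(L * ζ * t))) :=
      lintegral_mono_set Ioo_subset_Ioi_self
    _ = ENNReal.ofReal (Gamma p * (L * ζ) ^ (-p)) :=
      lintegral_rpow_mul_exp_neg_mul_Ioi hp₁ (mul_pos hL hζ)

/-- Sharp-constant case (`L_p = 1`) of Lemma A, extended to all `0 < p ≤ g − 1`:
for all `L > 0` and `ζ > 0`,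
`∫₀^∞ u^{p−1}(2uL+1)^{−g}·exp(−uLζ/(2uL+1)) du ≤ Γ(p)·(Lζ)^{−p}`. -/
theorem cir_negative_moment_bound_sharp
    (p g : ℝ) (hg : 1 < g) (hp₁ : 0 < p) (hp₂ : p ≤ g - 1) :
    ∀ L : ℝ, 0 < L → ∀ ζ : ℝ, 0 < ζ →
      ∫⁻ u in Set.Ioi (0 : ℝ),
          ENNReal.ofReal (u ^ (p - 1) * (2 * u * L + 1) ^ (-g)
            * Real.exp (-(u * L * ζ) / (2 * u * L + 1))) ≤
        ENNReal.ofReal (Real.Gamma p * (L * ζ) ^ (-p)) :=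
  cir_negative_moment_bound_sharp_general p g hp₁ hp₂
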